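/- arXiv:2305.09377 — 2 statements merged into one kernel-verified Lean document; each statement's English description precedes it below -/
import Mathlib

section
/- Let λ be a partition with λ_i > λ_{i+1} > λ_{i+2} (indices from 1, with trailing zeros), and let ν be obtained from λ by decreasing λ_i by 1 and increasing λ_{i+2} by 1. Then ν is a partition, it has the same number of odd columns as λ, and b(ν) = b(λ) + 2. -/
/-!
Both statistics are sums over the cells `(a, b)` of `μ` of a function of the row index `a`:
`b(μ) = ∑ a`, and the number of odd columns is `∑ (-1) ^ a`, because a column of length `m`
contributes `∑_{a < m} (-1) ^ a = m mod 2`. Under the hypotheses, the last cell of row `i` is a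
corner of `λ` and the cell just past the end of row `i + 2` can be added once that corner is
removed, so `ν` is `λ` with one cell moved from row `i` to row `i + 2`. This changes the first
sum by `(i + 2) - i = 2` and the second by `(-1) ^ (i + 2) - (-1) ^ i = 0`.
-/

/-- A standard Young tableau of shape `μ`: a filling of the cells of `μ`
by `1,…,n` (each exactly once, `n = μ.card`), strictly increasing along
rows and columns. -/
structure SYT (μ : YoungDiagram) where
  entry : ℕ × ℕ → ℕ
  mapsTo : ∀ c ∈ μ.cells, entry c ∈ Finset.Icc 1 μ.card
  injOn : ∀ c ∈ μ.cells, ∀ d ∈ μ.cells, entry c = entry d → c = d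
  surjOn : ∀ v ∈ Finset.Icc 1 μ.card, ∃ c ∈ μ.cells, entry c = v
  row_lt : ∀ {i j1 j2 : ℕ}, j1 < j2 → (i, j2) ∈ μ → entry (i, j1) < entry (i, j2)
  col_lt : ∀ {i1 i2 j : ℕ}, i1 < i2 → (i2, j) ∈ μ → entry (i1, j) < entry (i2, j)

/-- `i` is a descent of the tableau `T`: the entry `i+1` lies in a strictly
lower row than the entry `i`. -/
def SYT.des {μ : YoungDiagram} (T : SYT μ) (i : ℕ) : Prop :=
  ∃ c ∈ μ.cells, ∃ d ∈ μ.cells, T.entry c = i ∧ T.entry d = i + 1 ∧ c.1 < d.1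

open scoped Classical in
/-- The major index of a standard Young tableau: the sum of its descents. -/
noncomputable def SYT.maj {μ : YoungDiagram} (T : SYT μ) : ℕ :=
  ∑ i ∈ Finset.range μ.card, if T.des i then i else 0

/-- `bstat μ = ∑ (i-1) μ_i` (rows 1-indexed), i.e. `∑ i * μ.rowLen i` with rows 0-indexed. -/
def bstat (μ : YoungDiagram) : ℕ :=
  ∑ i ∈ Finset.range μ.card, i * μ.rowLen i

/-- The number of columns of `μ` of odd length. -/
def oddCols (μ : YoungDiagram) : ℕ :=
  ((Finset.range μ.card).filter fun j => Odd (μ.colLen j)).card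

theorem sum_range_neg_one_pow (m : ℕ) :
    ∑ a ∈ Finset.range m, (-1 : ℤ) ^ a = if Odd m then 1 else 0 := by
  induction m with
  | zero => simp
  | succ m ih =>
    rw [Finset.sum_range_succ, ih]
    rcases Nat.even_or_odd m with hm | hm
    · simp [hm.neg_one_pow, Nat.not_odd_iff_even.mpr hm, hm.add_one]
    · simp [hm.neg_one_pow, hm, Nat.not_odd_iff_even.mpr hm.add_one]

namespace YoungDiagram

variable {μ : YoungDiagram}

theorem fst_lt_card {c : ℕ × ℕ} (hc : c ∈ μ) : c.1 < μ.card :=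
  calc c.1 < μ.colLen c.2 := mem_iff_lt_colLen.mp hc
    _ = (μ.col c.2).card := μ.colLen_eq_card
    _ ≤ μ.card := Finset.card_le_card (Finset.filter_subset _ _)

theorem snd_lt_card {c : ℕ × ℕ} (hc : c ∈ μ) : c.2 < μ.card :=
  calc c.2 < μ.rowLen c.1 := mem_iff_lt_rowLen.mp hc
    _ = (μ.row c.1).card := μ.rowLen_eq_card
    _ ≤ μ.card := Finset.card_le_card (Finset.filter_subset _ _)

theorem sum_cells_eq_sum_rowLen {M : Type*} [AddCommMonoid M] (μ : YoungDiagram) (f : ℕ → M) :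
    ∑ c ∈ μ.cells, f c.1 = ∑ a ∈ Finset.range μ.card, μ.rowLen a • f a := by
  rw [← Finset.sum_fiberwise_of_maps_to (g := Prod.fst) (t := Finset.range μ.card)
    fun c hc => Finset.mem_range.mpr (fst_lt_card hc)]
  refine Finset.sum_congr rfl fun a _ => ?_
  rw [rowLen_eq_card, ← Finset.sum_const]
  exact Finset.sum_congr rfl fun c hc => by rw [(mem_row_iff.mp hc).2]

theorem sum_cells_eq_sum_colLen {M : Type*} [AddCommMonoid M] (μ : YoungDiagram) (f : ℕ → M) :
    ∑ c ∈ μ.cells, f c.1 = ∑ j ∈ Finset.range μ.card, ∑ a ∈ Finset.range (μ.colLen j), f a := by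
  rw [← Finset.sum_fiberwise_of_maps_to (g := Prod.snd) (t := Finset.range μ.card)
    fun c hc => Finset.mem_range.mpr (snd_lt_card hc)]
  refine Finset.sum_congr rfl fun j _ => ?_
  change ∑ c ∈ μ.col j, f c.1 = _
  rw [col_eq_prod, Finset.sum_product]
  simp

theorem rowLen_eq_of_forall_mem_iff {a n : ℕ} (h : ∀ b, (a, b) ∈ μ ↔ b < n) :
    μ.rowLen a = n :=
  eq_of_forall_lt_iff fun b => by rw [← mem_iff_lt_rowLen, h]

theorem rowLen_eq_of_maximal {y : ℕ × ℕ} (hyμ : y ∈ μ) (hy : ∀ c ∈ μ, ¬ y < c) :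
    μ.rowLen y.1 = y.2 + 1 := by
  refine rowLen_eq_of_forall_mem_iff fun b => ⟨fun hb => ?_, fun hb => ?_⟩
  · by_contra! h
    exact hy _ (μ.isLowerSet (Prod.mk_le_mk.mpr ⟨le_rfl, h⟩) hb)
      (Prod.mk_lt_mk_iff_right.mpr (Nat.lt_succ_self _))
  · exact μ.isLowerSet (Prod.mk_le_mk.mpr ⟨le_rfl, Nat.lt_succ_iff.mp hb⟩) hyμ

theorem rowLen_eq_of_minimal {x : ℕ × ℕ} (hxμ : x ∉ μ) (hx : ∀ c < x, c ∈ μ) :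
    μ.rowLen x.1 = x.2 := by
  refine rowLen_eq_of_forall_mem_iff fun b => ⟨fun hb => ?_, fun hb => hx _ ?_⟩
  · by_contra! h
    exact hxμ (μ.isLowerSet (Prod.mk_le_mk.mpr ⟨le_rfl, h⟩) hb)
  · exact Prod.mk_lt_mk_iff_right.mpr hb

def moveCell (μ : YoungDiagram) (y x : ℕ × ℕ) (hy : ∀ c ∈ μ, ¬ y < c)
    (hx : ∀ c < x, c ∈ μ ∧ c ≠ y) : YoungDiagram where
  cells := insert x (μ.cells.erase y)
  isLowerSet := by
    intro b a hab hb
    simp only [Finset.coe_insert, Finset.coe_erase, Set.mem_insert_iff, Set.mem_sdiff,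
      Finset.mem_coe, mem_cells, Set.mem_singleton_iff] at hb ⊢
    rcases hb with rfl | ⟨hbμ, hby⟩
    · rcases hab.lt_or_eq with h | h
      · exact Or.inr (hx a h)
      · exact Or.inl h
    · refine Or.inr ⟨μ.isLowerSet hab hbμ, ?_⟩
      rintro rfl
      exact hy b hbμ (hab.lt_of_ne fun h => hby h.symm)

section moveCell

variable {y x : ℕ × ℕ} {hy : ∀ c ∈ μ, ¬ y < c} {hx : ∀ c < x, c ∈ μ ∧ c ≠ y}

theorem mem_moveCell {c : ℕ × ℕ} : c ∈ μ.moveCell y x hy hx ↔ c = x ∨ c ≠ y ∧ c ∈ μ := by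
  change c ∈ insert x (μ.cells.erase y) ↔ _
  simp

theorem sum_cells_moveCell {M : Type*} [AddCommMonoid M] (hyμ : y ∈ μ) (hxμ : x ∉ μ)
    (f : ℕ × ℕ → M) :
    ∑ c ∈ (μ.moveCell y x hy hx).cells, f c + f y = ∑ c ∈ μ.cells, f c + f x := by
  change ∑ c ∈ insert x (μ.cells.erase y), f c + f y = _
  rw [Finset.sum_insert fun h => hxμ (Finset.mem_of_mem_erase h), add_assoc,
    Finset.sum_erase_add _ _ hyμ, add_comm]

theorem rowLen_moveCell_of_ne {a : ℕ} (hay : a ≠ y.1) (hax : a ≠ x.1) :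
    (μ.moveCell y x hy hx).rowLen a = μ.rowLen a :=
  rowLen_eq_of_forall_mem_iff fun b => by
    rw [mem_moveCell, mem_iff_lt_rowLen]
    constructor
    · rintro (rfl | ⟨-, h⟩)
      · exact absurd rfl hax
      · exact h
    · exact fun h => Or.inr ⟨by rintro rfl; exact hay rfl, h⟩

theorem rowLen_moveCell_src (hyμ : y ∈ μ) (hyx : y.1 ≠ x.1) :
    (μ.moveCell y x hy hx).rowLen y.1 = y.2 := by
  refine rowLen_eq_of_forall_mem_iff fun b => ?_
  rw [mem_moveCell, mem_iff_lt_rowLen, rowLen_eq_of_maximal hyμ hy]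
  obtain ⟨y₁, y₂⟩ := y
  obtain ⟨x₁, x₂⟩ := x
  simp only [ne_eq, Prod.mk.injEq, true_and] at hyx ⊢
  omega

theorem rowLen_moveCell_dst (hxμ : x ∉ μ) (hyx : y.1 ≠ x.1) :
    (μ.moveCell y x hy hx).rowLen x.1 = x.2 + 1 := by
  refine rowLen_eq_of_forall_mem_iff fun b => ?_
  rw [mem_moveCell, mem_iff_lt_rowLen, rowLen_eq_of_minimal hxμ fun c hc => (hx c hc).1]
  obtain ⟨y₁, y₂⟩ := y
  obtain ⟨x₁, x₂⟩ := x
  simp only [ne_eq, Prod.mk.injEq, true_and] at hyx ⊢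
  omega

end moveCell

end YoungDiagram

open YoungDiagram

theorem bstat_eq_sum_cells (μ : YoungDiagram) : bstat μ = ∑ c ∈ μ.cells, c.1 := by
  simpa [bstat, mul_comm] using (sum_cells_eq_sum_rowLen μ id).symm

theorem oddCols_eq_sum_cells (μ : YoungDiagram) :
    (oddCols μ : ℤ) = ∑ c ∈ μ.cells, (-1) ^ c.1 := by
  rw [sum_cells_eq_sum_colLen μ fun a => (-1 : ℤ) ^ a, oddCols, Finset.card_filter]
  push_cast
  simp only [sum_range_neg_one_pow]

/-- Moving one square: if `λ_i > λ_{i+1} > λ_{i+2}` (rows 0-indexed), the shape `ν`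
obtained by decreasing row `i` by one and increasing row `i+2` by one is a Young
diagram with the same number of odd columns and `b(ν) = b(λ) + 2`. -/
theorem move_square (l : YoungDiagram) (i : ℕ)
    (h1 : l.rowLen (i + 1) < l.rowLen i) (h2 : l.rowLen (i + 2) < l.rowLen (i + 1)) :
    ∃ ν : YoungDiagram,
      ν.rowLen i = l.rowLen i - 1 ∧
      ν.rowLen (i + 2) = l.rowLen (i + 2) + 1 ∧
      (∀ j, j ≠ i → j ≠ i + 2 → ν.rowLen j = l.rowLen j) ∧
      oddCols ν = oddCols l ∧
      bstat ν = bstat l + 2 := by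
  set y : ℕ × ℕ := (i, l.rowLen i - 1)
  set x : ℕ × ℕ := (i + 2, l.rowLen (i + 2))
  have hyl : y ∈ l := mem_iff_lt_rowLen.mpr (by omega)
  have hxl : x ∉ l := fun h => (mem_iff_lt_rowLen.mp h).false
  have hy : ∀ c ∈ l, ¬ y < c := by
    rintro ⟨a, b⟩ hc hlt
    rw [mem_iff_lt_rowLen] at hc
    rcases Prod.lt_iff.mp hlt with ⟨ha, hb⟩ | ⟨ha, hb⟩
    all_goals simp only [y] at ha hb
    · have := l.rowLen_anti (i + 1) a ha
      omega
    · have := l.rowLen_anti i a ha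
      omega
  have hx : ∀ c < x, c ∈ l ∧ c ≠ y := by
    rintro ⟨a, b⟩ hlt
    rw [mem_iff_lt_rowLen, Ne, Prod.mk.injEq]
    rcases Prod.lt_iff.mp hlt with ⟨ha, hb⟩ | ⟨ha, hb⟩
    all_goals simp only [x] at ha hb
    · have := l.rowLen_anti a (i + 1) (by omega)
      omega
    · have := l.rowLen_anti a (i + 2) ha
      omega
  have hyx : y.1 ≠ x.1 := by simp [x, y]
  refine ⟨l.moveCell y x hy hx, rowLen_moveCell_src hyl hyx, rowLen_moveCell_dst hxl hyx,
    fun j hj hj2 => rowLen_moveCell_of_ne hj hj2, ?_, ?_⟩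
  · have h := sum_cells_moveCell (hy := hy) (hx := hx) hyl hxl fun c => (-1 : ℤ) ^ c.1
    rw [← oddCols_eq_sum_cells, ← oddCols_eq_sum_cells, pow_add, neg_one_sq, mul_one] at h
    exact_mod_cast add_right_cancel h
  · have h := sum_cells_moveCell (hy := hy) (hx := hx) hyl hxl Prod.fst
    rw [← bstat_eq_sum_cells, ← bstat_eq_sum_cells] at h
    change _ + i = _ + (i + 2) at h
    omega
end

section
/- Let n = 2k + r with r ≥ 1. For every integer v with k ≤ v ≤ C(n,2) − C(r,2), there exists a standard Young tableau T of size n whose shape has exactly r odd columns and maj(T) = v. -/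
/-- cells of shape (A, B, 1^h) -/
def shpCells (A B h : ℕ) : Finset (ℕ × ℕ) :=
  ((Finset.range A).image fun j => (0, j)) ∪
  ((Finset.range B).image fun j => (1, j)) ∪
  ((Finset.range h).image fun y => (2 + y, 0))

lemma mem_shpCells {A B h : ℕ} {c : ℕ × ℕ} :
    c ∈ shpCells A B h ↔
      (c.1 = 0 ∧ c.2 < A) ∨ (c.1 = 1 ∧ c.2 < B) ∨ (2 ≤ c.1 ∧ c.1 < 2 + h ∧ c.2 = 0) := by
  obtain ⟨i, j⟩ := c
  simp only [shpCells, Finset.mem_union, Finset.mem_image, Finset.mem_range, Prod.mk.injEq]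
  constructor
  · rintro ((⟨x, hx, h1, h2⟩ | ⟨x, hx, h1, h2⟩) | ⟨x, hx, h1, h2⟩) <;> omega
  · rintro (⟨h1, h2⟩ | ⟨h1, h2⟩ | ⟨h1, h2, h3⟩)
    · exact Or.inl (Or.inl ⟨j, h2, h1.symm, rfl⟩)
    · exact Or.inl (Or.inr ⟨j, h2, h1.symm, rfl⟩)
    · exact Or.inr ⟨i - 2, by omega, by omega, h3.symm⟩

def shp (A B h : ℕ) (hBA : B ≤ A) (hhB : h = 0 ∨ 1 ≤ B) : YoungDiagram where
  cells := shpCells A B h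
  isLowerSet := by
    rintro ⟨i, j⟩ ⟨i', j'⟩ ⟨hi, hj⟩ hmem
    simp only [Finset.mem_coe, mem_shpCells] at *
    omega

lemma mem_shp {A B h : ℕ} {hBA} {hhB} {c : ℕ × ℕ} :
    c ∈ shp A B h hBA hhB ↔
      (c.1 = 0 ∧ c.2 < A) ∨ (c.1 = 1 ∧ c.2 < B) ∨ (2 ≤ c.1 ∧ c.1 < 2 + h ∧ c.2 = 0) :=
  mem_shpCells

lemma shp_card {A B h : ℕ} (hBA : B ≤ A) (hhB : h = 0 ∨ 1 ≤ B) :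
    (shp A B h hBA hhB).card = A + B + h := by
  show (shpCells A B h).card = A + B + h
  have i1 : Function.Injective (fun j : ℕ => ((0 : ℕ), j)) := by
    intro x y hxy; simpa using hxy
  have i2 : Function.Injective (fun j : ℕ => ((1 : ℕ), j)) := by
    intro x y hxy; simpa using hxy
  have i3 : Function.Injective (fun y : ℕ => (2 + y, (0 : ℕ))) := by
    intro x y hxy; simpa using hxy
  have d1 : Disjoint ((Finset.range A).image fun j => ((0:ℕ), j))
      ((Finset.range B).image fun j => ((1:ℕ), j)) := by
    simp only [Finset.disjoint_left, Finset.mem_image, Finset.mem_range]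
    rintro ⟨i, j⟩ ⟨x, hx, hh⟩ ⟨y, hy, hh2⟩
    rw [Prod.mk.injEq] at hh hh2; omega
  have d2 : Disjoint (((Finset.range A).image fun j => ((0:ℕ), j)) ∪
      ((Finset.range B).image fun j => ((1:ℕ), j)))
      ((Finset.range h).image fun y => (2 + y, (0:ℕ))) := by
    simp only [Finset.disjoint_left, Finset.mem_union, Finset.mem_image, Finset.mem_range]
    rintro ⟨i, j⟩ (⟨x, hx, hh⟩ | ⟨x, hx, hh⟩) ⟨y, hy, hh2⟩ <;>
      rw [Prod.mk.injEq] at * <;> omega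
  rw [shpCells, Finset.card_union_of_disjoint d2, Finset.card_union_of_disjoint d1,
    Finset.card_image_of_injective _ i1, Finset.card_image_of_injective _ i2,
    Finset.card_image_of_injective _ i3]
  simp

lemma colLen_eq_of {μ : YoungDiagram} {j E : ℕ} (h : ∀ i, (i, j) ∈ μ ↔ i < E) :
    μ.colLen j = E := by
  have h1 : ∀ i, i < μ.colLen j ↔ i < E := by
    intro i; rw [← YoungDiagram.mem_iff_lt_colLen]; exact h i
  have := h1 (μ.colLen j); have := h1 E; omega

lemma shp_colLen {A B h : ℕ} (hBA : B ≤ A) (hhB : h = 0 ∨ 1 ≤ B) (j : ℕ) :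
    (shp A B h hBA hhB).colLen j =
      (if j < A then 1 else 0) + (if j < B then 1 else 0) + (if j = 0 then h else 0) := by
  apply colLen_eq_of
  intro i
  rw [mem_shp]
  split_ifs <;> omega

lemma oddCols_shp_filter {A B h : ℕ} (hBA : B ≤ A) (hhB : h = 0 ∨ 1 ≤ B) (hB : 1 ≤ B) :
    ((Finset.range (A+B+h)).filter fun j => Odd ((shp A B h hBA hhB).colLen j))
      = (if h % 2 = 1 then {0} else ∅) ∪ Finset.Ico B A := by
  ext j
  simp only [Finset.mem_filter, Finset.mem_range]
  constructor
  · rintro ⟨hj, hodd⟩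
    rw [Nat.odd_iff, shp_colLen hBA hhB] at hodd
    simp only [Finset.mem_union, Finset.mem_Ico]
    split_ifs at hodd ⊢ <;>
      simp only [Finset.mem_singleton, Finset.notMem_empty] <;> omega
  · intro hj
    simp only [Finset.mem_union, Finset.mem_Ico] at hj
    split_ifs at hj with hp
    · simp only [Finset.mem_singleton] at hj
      refine ⟨by omega, ?_⟩
      rw [Nat.odd_iff, shp_colLen hBA hhB]
      split_ifs <;> omega
    · simp only [Finset.notMem_empty, false_or] at hj
      refine ⟨by omega, ?_⟩
      rw [Nat.odd_iff, shp_colLen hBA hhB]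
      split_ifs <;> omega

lemma oddCols_shp {A B h : ℕ} (hBA : B ≤ A) (hhB : h = 0 ∨ 1 ≤ B) (hB : 1 ≤ B) :
    oddCols (shp A B h hBA hhB) = (A - B) + (if h % 2 = 1 then 1 else 0) := by
  unfold oddCols
  rw [shp_card, oddCols_shp_filter hBA hhB hB]
  rw [Finset.card_union_of_disjoint]
  · split_ifs <;> simp [Nat.card_Ico] <;> omega
  · split_ifs
    · simp only [Finset.disjoint_left, Finset.mem_singleton, Finset.mem_Ico]
      rintro a rfl ⟨hh1, hh2⟩; omega
    · simp

lemma oddCols_row {A : ℕ} (hBA : (0:ℕ) ≤ A) (hhB : (0:ℕ) = 0 ∨ 1 ≤ (0:ℕ)) :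
    oddCols (shp A 0 0 hBA hhB) = A := by
  unfold oddCols
  rw [shp_card]
  have heq : ((Finset.range (A+0+0)).filter fun j => Odd ((shp A 0 0 hBA hhB).colLen j))
      = Finset.range A := by
    ext j
    simp only [Finset.mem_filter, Finset.mem_range, shp_colLen hBA hhB, Nat.odd_iff]
    split_ifs <;> omega
  rw [heq, Finset.card_range]

-- Builder
lemma fchain {N : ℕ} {f : ℕ → ℕ} (hf : ∀ j, j + 1 < N → f j < f (j + 1)) :
    ∀ j2 j1, j1 < j2 → j2 < N → f j1 < f j2 := by
  intro j2
  induction j2 with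
  | zero => intro j1 h1 _; omega
  | succ m ih =>
    intro j1 h1 h2
    rcases Nat.lt_or_ge j1 m with hh | hh
    · exact lt_trans (ih j1 hh (by omega)) (hf m h2)
    · have hj : j1 = m := by omega
      subst hj; exact hf j1 h2

def bEntry (A B : ℕ) (f g : ℕ → ℕ) : ℕ × ℕ → ℕ := fun c =>
  if c.1 = 0 then f c.2 else if c.1 = 1 then g c.2 else A + B + (c.1 - 1)

lemma bEntry0 {A B : ℕ} {f g : ℕ → ℕ} (j : ℕ) : bEntry A B f g (0, j) = f j := rfl
lemma bEntry1 {A B : ℕ} {f g : ℕ → ℕ} (j : ℕ) : bEntry A B f g (1, j) = g j := rfl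
lemma bEntry2 {A B : ℕ} {f g : ℕ → ℕ} {i : ℕ} (j : ℕ) (hi : 2 ≤ i) :
    bEntry A B f g (i, j) = A + B + (i - 1) := by
  unfold bEntry; rw [if_neg (by omega), if_neg (by omega)]

structure BuilderHyps (A B h : ℕ) (f g : ℕ → ℕ) : Prop where
  hBA : B ≤ A
  hhB : h = 0 ∨ 1 ≤ B
  hfmono : ∀ j, j + 1 < A → f j < f (j + 1)
  hgmono : ∀ j, j + 1 < B → g j < g (j + 1)
  hcol : ∀ j, j < B → f j < g j
  hfran : ∀ j, j < A → 1 ≤ f j ∧ f j ≤ A + B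
  hgran : ∀ j, j < B → 1 ≤ g j ∧ g j ≤ A + B
  hcover : ∀ v, 1 ≤ v → v ≤ A + B → (∃ j, j < A ∧ f j = v) ∨ (∃ j, j < B ∧ g j = v)
  hdisj : ∀ i, i < A → ∀ j, j < B → f i ≠ g j

def buildSYT {A B h : ℕ} {f g : ℕ → ℕ} (H : BuilderHyps A B h f g) :
    SYT (shp A B h H.hBA H.hhB) where
  entry := bEntry A B f g
  mapsTo := by
    rintro ⟨i, j⟩ hc
    rw [YoungDiagram.mem_cells, mem_shp] at hc
    rw [Finset.mem_Icc, shp_card]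
    rcases hc with ⟨h1, h2⟩ | ⟨h1, h2⟩ | ⟨h1, h2, h3⟩
    · obtain rfl : i = 0 := h1
      rw [bEntry0]
      have := H.hfran j h2; omega
    · obtain rfl : i = 1 := h1
      rw [bEntry1]
      have := H.hgran j h2; omega
    · rw [bEntry2 j h1]; omega
  injOn := by
    rintro ⟨i, j⟩ hc ⟨i', j'⟩ hd he
    rw [YoungDiagram.mem_cells, mem_shp] at hc hd
    rcases hc with ⟨h1, h2⟩ | ⟨h1, h2⟩ | ⟨h1, h2, h3⟩ <;>
      [(obtain rfl : i = 0 := h1); (obtain rfl : i = 1 := h1); skip] <;>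
      rcases hd with ⟨h1', h2'⟩ | ⟨h1', h2'⟩ | ⟨h1', h2', h3'⟩ <;>
      [(obtain rfl : i' = 0 := h1'); (obtain rfl : i' = 1 := h1'); skip;
       (obtain rfl : i' = 0 := h1'); (obtain rfl : i' = 1 := h1'); skip;
       (obtain rfl : i' = 0 := h1'); (obtain rfl : i' = 1 := h1'); skip]
    · rw [bEntry0, bEntry0] at he
      rcases Nat.lt_trichotomy j j' with ht | ht | ht
      · exact absurd he (Nat.ne_of_lt (fchain H.hfmono j' j ht h2'))
      · rw [ht]
      · exact absurd he.symm (Nat.ne_of_lt (fchain H.hfmono j j' ht h2))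
    · rw [bEntry0, bEntry1] at he
      exact absurd he (H.hdisj j h2 j' h2')
    · rw [bEntry0, bEntry2 j' h1'] at he
      have := H.hfran j h2; omega
    · rw [bEntry1, bEntry0] at he
      exact absurd he.symm (H.hdisj j' h2' j h2)
    · rw [bEntry1, bEntry1] at he
      rcases Nat.lt_trichotomy j j' with ht | ht | ht
      · exact absurd he (Nat.ne_of_lt (fchain H.hgmono j' j ht h2'))
      · rw [ht]
      · exact absurd he.symm (Nat.ne_of_lt (fchain H.hgmono j j' ht h2))
    · rw [bEntry1, bEntry2 j' h1'] at he
      have := H.hgran j h2; omega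
    · rw [bEntry2 j h1, bEntry0] at he
      have := H.hfran j' h2'; omega
    · rw [bEntry2 j h1, bEntry1] at he
      have := H.hgran j' h2'; omega
    · rw [bEntry2 j h1, bEntry2 j' h1'] at he
      obtain rfl : j = 0 := h3
      obtain rfl : j' = 0 := h3'
      have : i = i' := by omega
      rw [this]
  surjOn := by
    intro v hv
    rw [Finset.mem_Icc, shp_card] at hv
    rcases le_or_gt v (A + B) with hle | hlt
    · rcases H.hcover v hv.1 hle with ⟨j, hj, he⟩ | ⟨j, hj, he⟩
      · exact ⟨(0, j), by rw [YoungDiagram.mem_cells, mem_shp]; left; exact ⟨rfl, hj⟩,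
          by rw [bEntry0]; exact he⟩
      · exact ⟨(1, j), by rw [YoungDiagram.mem_cells, mem_shp]; right; left; exact ⟨rfl, hj⟩,
          by rw [bEntry1]; exact he⟩
    · refine ⟨(2 + (v - A - B - 1), 0), ?_, ?_⟩
      · rw [YoungDiagram.mem_cells, mem_shp]; right; right
        exact ⟨by omega, by omega, rfl⟩
      · rw [bEntry2 0 (by omega)]; omega
  row_lt := by
    intro i j1 j2 hj hm
    rw [mem_shp] at hm
    rcases hm with ⟨h1, h2⟩ | ⟨h1, h2⟩ | ⟨h1, h2, h3⟩
    · obtain rfl : i = 0 := h1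
      rw [bEntry0, bEntry0]
      exact fchain H.hfmono j2 j1 hj h2
    · obtain rfl : i = 1 := h1
      rw [bEntry1, bEntry1]
      exact fchain H.hgmono j2 j1 hj h2
    · omega
  col_lt := by
    intro i1 i2 j hi hm
    rw [mem_shp] at hm
    rcases hm with ⟨h1, h2⟩ | ⟨h1, h2⟩ | ⟨h1, h2, h3⟩
    · omega
    · obtain rfl : i2 = 1 := h1
      obtain rfl : i1 = 0 := by omega
      rw [bEntry0, bEntry1]
      exact H.hcol j h2
    · obtain rfl : j = 0 := h3
      have hB1 : 1 ≤ B := by rcases H.hhB with hh | hh <;> omega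
      have hBA := H.hBA
      rw [bEntry2 0 h1]
      rcases Nat.lt_trichotomy i1 1 with ht | ht | ht
      · obtain rfl : i1 = 0 := by omega
        rw [bEntry0]
        have := H.hfran 0 (by omega); omega
      · subst ht
        rw [bEntry1]
        have := H.hgran 0 (by omega); omega
      · rw [bEntry2 0 (by omega)]; omega

-- descent characterisation and maj of built tableaux
lemma build_des {A B h : ℕ} {f g : ℕ → ℕ} (H : BuilderHyps A B h f g) (D : Finset ℕ)
    (hD : ∀ i : ℕ, ((∃ x, x < A ∧ f x = i) ∧ (∃ y, y < B ∧ g y = i + 1)) ↔ i ∈ D) (i : ℕ) :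
    (buildSYT H).des i ↔ (i ∈ D ∨ (A + B ≤ i ∧ i < A + B + h)) := by
  have eE : (buildSYT H).entry = bEntry A B f g := rfl
  constructor
  · rintro ⟨⟨ci, cj⟩, hc, ⟨di, dj⟩, hd, e1, e2, hlt⟩
    rw [YoungDiagram.mem_cells, mem_shp] at hc hd
    rw [eE] at e1 e2
    simp only at hlt
    rcases hd with ⟨h1', h2'⟩ | ⟨h1', h2'⟩ | ⟨h1', h2', h3'⟩
    · simp only at h1'; omega
    · obtain rfl : di = 1 := h1'
      obtain rfl : ci = 0 := by omega
      rw [bEntry1] at e2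
      rcases hc with ⟨hh1, hh2⟩ | ⟨hh1, hh2⟩ | ⟨hh1, hh2, hh3⟩
      · rw [bEntry0] at e1
        left; rw [← hD]
        exact ⟨⟨cj, hh2, e1⟩, ⟨dj, h2', e2⟩⟩
      · simp only at hh1; omega
      · simp only at hh1; omega
    · right
      simp only at h1' h2'
      rw [bEntry2 dj h1'] at e2
      omega
  · rintro (hmem | ⟨hge, hlt⟩)
    · obtain ⟨⟨x, hx, hfx⟩, ⟨y, hy, hgy⟩⟩ := (hD i).2 hmem
      refine ⟨(0, x), ?_, (1, y), ?_, ?_, ?_, ?_⟩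
      · rw [YoungDiagram.mem_cells, mem_shp]; left; exact ⟨rfl, hx⟩
      · rw [YoungDiagram.mem_cells, mem_shp]; right; left; exact ⟨rfl, hy⟩
      · rw [eE, bEntry0]; exact hfx
      · rw [eE, bEntry1]; exact hgy
      · exact Nat.zero_lt_one
    · have hB1 : 1 ≤ B := by rcases H.hhB with hh | hh <;> omega
      have hA1 : 1 ≤ A := le_trans hB1 H.hBA
      have hdmem : (2 + (i - A - B), 0) ∈ shp A B h H.hBA H.hhB := by
        rw [mem_shp]; right; right; exact ⟨by omega, by omega, rfl⟩
      have hdent : (buildSYT H).entry (2 + (i - A - B), 0) = i + 1 := by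
        rw [eE, bEntry2 0 (by omega)]; omega
      rcases eq_or_lt_of_le hge with heq | hgt
      · rcases H.hcover i (by omega) (by omega) with ⟨x, hx, he⟩ | ⟨y, hy, he⟩
        · refine ⟨(0, x), ?_, (2 + (i - A - B), 0), ?_, ?_, hdent, ?_⟩
          · rw [YoungDiagram.mem_cells, mem_shp]; left; exact ⟨rfl, hx⟩
          · rw [YoungDiagram.mem_cells]; exact hdmem
          · rw [eE, bEntry0]; exact he
          · show (0:ℕ) < 2 + (i - A - B); omega
        · refine ⟨(1, y), ?_, (2 + (i - A - B), 0), ?_, ?_, hdent, ?_⟩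
          · rw [YoungDiagram.mem_cells, mem_shp]; right; left; exact ⟨rfl, hy⟩
          · rw [YoungDiagram.mem_cells]; exact hdmem
          · rw [eE, bEntry1]; exact he
          · show (1:ℕ) < 2 + (i - A - B); omega
      · refine ⟨(2 + (i - A - B - 1), 0), ?_, (2 + (i - A - B), 0), ?_, ?_, hdent, ?_⟩
        · rw [YoungDiagram.mem_cells, mem_shp]; right; right; exact ⟨by omega, by omega, rfl⟩
        · rw [YoungDiagram.mem_cells]; exact hdmem
        · rw [eE, bEntry2 0 (by omega)]; omega
        · simp only; omega

lemma build_maj {A B h : ℕ} {f g : ℕ → ℕ} (H : BuilderHyps A B h f g) (D : Finset ℕ)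
    (hD : ∀ i : ℕ, ((∃ x, x < A ∧ f x = i) ∧ (∃ y, y < B ∧ g y = i + 1)) ↔ i ∈ D) :
    (buildSYT H).maj = D.sum id + (Finset.Ico (A + B) (A + B + h)).sum id := by
  have hsub : ∀ i ∈ D, i < A + B := by
    intro i hi
    obtain ⟨⟨x, hx, hfx⟩, ⟨y, hy, hgy⟩⟩ := (hD i).2 hi
    have := H.hgran y hy; omega
  classical
  unfold SYT.maj
  rw [shp_card]
  have hcong : ∀ i ∈ Finset.range (A + B + h), (if (buildSYT H).des i then i else 0)
      = (if i ∈ D ∪ Finset.Ico (A + B) (A + B + h) then i else 0) := by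
    intro i _
    have hiff : (buildSYT H).des i ↔ (i ∈ D ∪ Finset.Ico (A + B) (A + B + h)) := by
      rw [build_des H D hD i, Finset.mem_union, Finset.mem_Ico]
    simp only [hiff]
  rw [Finset.sum_congr rfl hcong, Finset.sum_ite_mem]
  have hinter : Finset.range (A + B + h) ∩ (D ∪ Finset.Ico (A + B) (A + B + h))
      = D ∪ Finset.Ico (A + B) (A + B + h) := by
    rw [Finset.inter_eq_right]
    intro x hx
    rw [Finset.mem_union, Finset.mem_Ico] at hx
    rw [Finset.mem_range]
    rcases hx with hx | hx
    · have := hsub x hx; omega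
    · omega
  rw [hinter, Finset.sum_union]
  · rfl
  · rw [Finset.disjoint_left]
    intro a ha hb
    rw [Finset.mem_Ico] at hb
    have := hsub a ha; omega

-- adding a vertical domino at the bottom of column 0
lemma rowLen_zero_le_card (μ : YoungDiagram) : μ.rowLen 0 ≤ μ.card := by
  rw [YoungDiagram.rowLen_eq_card]
  exact Finset.card_le_card fun c hc => (YoungDiagram.mem_row_iff.1 hc).1

lemma colLen_eq_zero_of_card_le {μ : YoungDiagram} {j : ℕ} (hj : μ.card ≤ j) :
    μ.colLen j = 0 := by
  by_contra hne
  have h0 : (0, j) ∈ μ := YoungDiagram.mem_iff_lt_colLen.2 (by omega)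
  have h1 : j < μ.rowLen 0 := YoungDiagram.mem_iff_lt_rowLen.1 h0
  have := rowLen_zero_le_card μ
  omega

def addDomino (μ : YoungDiagram) : YoungDiagram where
  cells := μ.cells ∪ {(μ.colLen 0, 0), (μ.colLen 0 + 1, 0)}
  isLowerSet := by
    rintro ⟨i, j⟩ ⟨i', j'⟩ ⟨hi, hj⟩ hmem
    simp only [Finset.coe_union, Set.mem_union, Finset.mem_coe, Finset.coe_insert,
      Set.mem_insert_iff, Finset.coe_singleton, Set.mem_singleton_iff, Prod.mk.injEq] at hmem ⊢
    simp only at hi hj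
    rcases hmem with hm | ⟨hm1, hm2⟩ | ⟨hm1, hm2⟩
    · exact Or.inl (μ.isLowerSet ⟨hi, hj⟩ hm)
    · subst hm1 hm2
      rcases Nat.lt_or_ge i' (μ.colLen 0) with hh | hh
      · left
        have : j' = 0 := by omega
        subst this
        exact YoungDiagram.mem_iff_lt_colLen.2 hh
      · right; left; omega
    · subst hm1 hm2
      rcases Nat.lt_or_ge i' (μ.colLen 0) with hh | hh
      · left
        have : j' = 0 := by omega
        subst this
        exact YoungDiagram.mem_iff_lt_colLen.2 hh
      · rcases Nat.lt_or_ge i' (μ.colLen 0 + 1) with hh2 | hh2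
        · right; left; omega
        · right; right; omega

lemma mem_addDomino {μ : YoungDiagram} {c : ℕ × ℕ} :
    c ∈ addDomino μ ↔ c ∈ μ ∨ c = (μ.colLen 0, 0) ∨ c = (μ.colLen 0 + 1, 0) := by
  show c ∈ μ.cells ∪ _ ↔ _
  simp only [Finset.mem_union, Finset.mem_insert, Finset.mem_singleton, YoungDiagram.mem_cells]

lemma notMem_self₁ (μ : YoungDiagram) : (μ.colLen 0, 0) ∉ μ := by
  rw [YoungDiagram.mem_iff_lt_colLen]; omega

lemma notMem_self₂ (μ : YoungDiagram) : (μ.colLen 0 + 1, 0) ∉ μ := by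
  rw [YoungDiagram.mem_iff_lt_colLen]; omega

lemma addDomino_card (μ : YoungDiagram) : (addDomino μ).card = μ.card + 2 := by
  have hdisj : Disjoint μ.cells ({(μ.colLen 0, 0), (μ.colLen 0 + 1, 0)} : Finset (ℕ × ℕ)) := by
    rw [Finset.disjoint_right]
    intro a ha
    rw [Finset.mem_insert, Finset.mem_singleton] at ha
    rw [YoungDiagram.mem_cells]
    rcases ha with rfl | rfl
    · exact notMem_self₁ μ
    · exact notMem_self₂ μ
  show (μ.cells ∪ _).card = _
  rw [Finset.card_union_of_disjoint hdisj]
  congr 1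
  rw [Finset.card_insert_of_notMem (by simp), Finset.card_singleton]

lemma addDomino_colLen_zero (μ : YoungDiagram) :
    (addDomino μ).colLen 0 = μ.colLen 0 + 2 := by
  apply colLen_eq_of
  intro i
  rw [mem_addDomino, YoungDiagram.mem_iff_lt_colLen, Prod.mk.injEq, Prod.mk.injEq]
  omega

lemma addDomino_colLen_pos (μ : YoungDiagram) {j : ℕ} (hj : 1 ≤ j) :
    (addDomino μ).colLen j = μ.colLen j := by
  apply colLen_eq_of
  intro i
  rw [mem_addDomino, YoungDiagram.mem_iff_lt_colLen, Prod.mk.injEq, Prod.mk.injEq]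
  omega

lemma addDomino_oddCols (μ : YoungDiagram) : oddCols (addDomino μ) = oddCols μ := by
  unfold oddCols
  rw [addDomino_card]
  have hstep : ∀ j, Odd ((addDomino μ).colLen j) ↔ Odd (μ.colLen j) := by
    intro j
    rcases Nat.eq_zero_or_pos j with rfl | hj
    · rw [addDomino_colLen_zero, Nat.odd_iff, Nat.odd_iff]; omega
    · rw [addDomino_colLen_pos μ hj]
  have h1 : (Finset.range (μ.card + 2)).filter (fun j => Odd ((addDomino μ).colLen j))
      = (Finset.range (μ.card + 2)).filter (fun j => Odd (μ.colLen j)) := by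
    apply Finset.filter_congr
    intro j _
    simp only [hstep]
  rw [h1]
  have h2 : (Finset.range (μ.card + 2)).filter (fun j => Odd (μ.colLen j))
      = (Finset.range μ.card).filter (fun j => Odd (μ.colLen j)) := by
    ext j
    simp only [Finset.mem_filter, Finset.mem_range]
    constructor
    · rintro ⟨hj, hodd⟩
      refine ⟨?_, hodd⟩
      by_contra hge
      rw [colLen_eq_zero_of_card_le (by omega)] at hodd
      simp at hodd
    · rintro ⟨hj, hodd⟩
      exact ⟨by omega, hodd⟩
  rw [h2]


def dEntry (μ : YoungDiagram) (T : SYT μ) : ℕ × ℕ → ℕ := fun c =>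
  if c = (μ.colLen 0, 0) then μ.card + 1
  else if c = (μ.colLen 0 + 1, 0) then μ.card + 2 else T.entry c

lemma dEntry_mem {μ : YoungDiagram} (T : SYT μ) {c : ℕ × ℕ} (hc : c ∈ μ) :
    dEntry μ T c = T.entry c := by
  unfold dEntry
  rw [if_neg, if_neg]
  · rintro rfl; exact notMem_self₂ μ hc
  · rintro rfl; exact notMem_self₁ μ hc

lemma dEntry_one {μ : YoungDiagram} (T : SYT μ) : dEntry μ T (μ.colLen 0, 0) = μ.card + 1 := by
  unfold dEntry; rw [if_pos rfl]

lemma dEntry_two {μ : YoungDiagram} (T : SYT μ) :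
    dEntry μ T (μ.colLen 0 + 1, 0) = μ.card + 2 := by
  unfold dEntry
  rw [if_neg (by simp), if_pos rfl]

lemma entry_le_card {μ : YoungDiagram} (T : SYT μ) {c : ℕ × ℕ} (hc : c ∈ μ) :
    1 ≤ T.entry c ∧ T.entry c ≤ μ.card := by
  have := T.mapsTo c ((YoungDiagram.mem_cells _).2 hc)
  rw [Finset.mem_Icc] at this
  exact this

def dominoSYT {μ : YoungDiagram} (T : SYT μ) : SYT (addDomino μ) where
  entry := dEntry μ T
  mapsTo := by
    intro c hc
    rw [YoungDiagram.mem_cells, mem_addDomino] at hc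
    rw [Finset.mem_Icc, addDomino_card]
    rcases hc with hc | rfl | rfl
    · rw [dEntry_mem T hc]
      have := entry_le_card T hc; omega
    · rw [dEntry_one]; omega
    · rw [dEntry_two]; omega
  injOn := by
    intro c hc d hd he
    rw [YoungDiagram.mem_cells, mem_addDomino] at hc hd
    rcases hc with hc | rfl | rfl <;> rcases hd with hd | rfl | rfl
    · rw [dEntry_mem T hc, dEntry_mem T hd] at he
      exact T.injOn c ((YoungDiagram.mem_cells _).2 hc) d ((YoungDiagram.mem_cells _).2 hd) he
    · rw [dEntry_mem T hc, dEntry_one] at he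
      have := entry_le_card T hc; omega
    · rw [dEntry_mem T hc, dEntry_two] at he
      have := entry_le_card T hc; omega
    · rw [dEntry_one, dEntry_mem T hd] at he
      have := entry_le_card T hd; omega
    · rfl
    · rw [dEntry_one, dEntry_two] at he; omega
    · rw [dEntry_two, dEntry_mem T hd] at he
      have := entry_le_card T hd; omega
    · rw [dEntry_two, dEntry_one] at he; omega
    · rfl
  surjOn := by
    intro v hv
    rw [Finset.mem_Icc, addDomino_card] at hv
    rcases Nat.lt_or_ge v (μ.card + 1) with hle | hgt
    · obtain ⟨c, hc, he⟩ := T.surjOn v (Finset.mem_Icc.2 ⟨hv.1, by omega⟩)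
      rw [YoungDiagram.mem_cells] at hc
      refine ⟨c, ?_, ?_⟩
      · rw [YoungDiagram.mem_cells, mem_addDomino]; exact Or.inl hc
      · rw [dEntry_mem T hc]; exact he
    · rcases Nat.eq_or_lt_of_le hgt with heq | hgt2
      · refine ⟨(μ.colLen 0, 0), ?_, ?_⟩
        · rw [YoungDiagram.mem_cells, mem_addDomino]; right; left; rfl
        · rw [dEntry_one]; omega
      · refine ⟨(μ.colLen 0 + 1, 0), ?_, ?_⟩
        · rw [YoungDiagram.mem_cells, mem_addDomino]; right; right; rfl
        · rw [dEntry_two]; omega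
  row_lt := by
    intro i j1 j2 hj hm
    rw [mem_addDomino] at hm
    have hm2 : (i, j2) ∈ μ := by
      rcases hm with hm | hm | hm
      · exact hm
      · exfalso; rw [Prod.mk.injEq] at hm; omega
      · exfalso; rw [Prod.mk.injEq] at hm; omega
    have hm1 : (i, j1) ∈ μ := μ.up_left_mem le_rfl (le_of_lt hj) hm2
    rw [dEntry_mem T hm1, dEntry_mem T hm2]
    exact T.row_lt hj hm2
  col_lt := by
    intro i1 i2 j hi hm
    rw [mem_addDomino, Prod.mk.injEq, Prod.mk.injEq] at hm
    rcases hm with hm | ⟨hm1, hm2⟩ | ⟨hm1, hm2⟩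
    · have hmm : (i1, j) ∈ μ := μ.up_left_mem (le_of_lt hi) le_rfl hm
      rw [dEntry_mem T hmm, dEntry_mem T hm]
      exact T.col_lt hi hm
    · subst hm1; subst hm2
      have hmm : (i1, 0) ∈ μ := YoungDiagram.mem_iff_lt_colLen.2 (by omega)
      rw [dEntry_mem T hmm, dEntry_one]
      have := entry_le_card T hmm; omega
    · subst hm1; subst hm2
      rw [dEntry_two]
      rcases Nat.lt_or_ge i1 (μ.colLen 0) with hh | hh
      · have hmm : (i1, 0) ∈ μ := YoungDiagram.mem_iff_lt_colLen.2 hh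
        rw [dEntry_mem T hmm]
        have := entry_le_card T hmm; omega
      · have : i1 = μ.colLen 0 := by omega
        subst this
        rw [dEntry_one]; omega

lemma dominoSYT_des_low {μ : YoungDiagram} (T : SYT μ) {i : ℕ} (hi : i < μ.card) :
    (dominoSYT T).des i ↔ T.des i := by
  have he : (dominoSYT T).entry = dEntry μ T := rfl
  constructor
  · rintro ⟨c, hc, d, hd, e1, e2, hlt⟩
    rw [YoungDiagram.mem_cells, mem_addDomino] at hc hd
    rw [he] at e1 e2
    rcases hc with hc | rfl | rfl
    · rcases hd with hd | rfl | rfl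
      · rw [dEntry_mem T hc] at e1
        rw [dEntry_mem T hd] at e2
        exact ⟨c, (YoungDiagram.mem_cells c).2 hc, d, (YoungDiagram.mem_cells d).2 hd,
          e1, e2, hlt⟩
      · rw [dEntry_one] at e2; omega
      · rw [dEntry_two] at e2; omega
    · rw [dEntry_one] at e1; omega
    · rw [dEntry_two] at e1; omega
  · rintro ⟨c, hc, d, hd, e1, e2, hlt⟩
    rw [YoungDiagram.mem_cells] at hc hd
    refine ⟨c, ?_, d, ?_, ?_, ?_, hlt⟩
    · rw [YoungDiagram.mem_cells, mem_addDomino]; exact Or.inl hc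
    · rw [YoungDiagram.mem_cells, mem_addDomino]; exact Or.inl hd
    · rw [he, dEntry_mem T hc]; exact e1
    · rw [he, dEntry_mem T hd]; exact e2

lemma dominoSYT_des_top1 {μ : YoungDiagram} (T : SYT μ) (hpos : 1 ≤ μ.card) :
    (dominoSYT T).des μ.card := by
  have he : (dominoSYT T).entry = dEntry μ T := rfl
  obtain ⟨c, hc, hce⟩ := T.surjOn μ.card (Finset.mem_Icc.2 ⟨hpos, le_rfl⟩)
  rw [YoungDiagram.mem_cells] at hc
  refine ⟨c, ?_, (μ.colLen 0, 0), ?_, ?_, ?_, ?_⟩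
  · rw [YoungDiagram.mem_cells, mem_addDomino]; exact Or.inl hc
  · rw [YoungDiagram.mem_cells, mem_addDomino]; right; left; rfl
  · rw [he, dEntry_mem T hc]; exact hce
  · rw [he, dEntry_one]
  · show c.1 < μ.colLen 0
    have h1 : c.1 < μ.colLen c.2 := by
      rw [← YoungDiagram.mem_iff_lt_colLen]; exact hc
    have h2 := μ.colLen_anti 0 c.2 (Nat.zero_le _)
    omega

lemma dominoSYT_des_top2 {μ : YoungDiagram} (T : SYT μ) :
    (dominoSYT T).des (μ.card + 1) := by
  have he : (dominoSYT T).entry = dEntry μ T := rfl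
  refine ⟨(μ.colLen 0, 0), ?_, (μ.colLen 0 + 1, 0), ?_, ?_, ?_, ?_⟩
  · rw [YoungDiagram.mem_cells, mem_addDomino]; right; left; rfl
  · rw [YoungDiagram.mem_cells, mem_addDomino]; right; right; rfl
  · rw [he, dEntry_one]
  · rw [he, dEntry_two]
  · show μ.colLen 0 < μ.colLen 0 + 1; omega

lemma dominoSYT_maj {μ : YoungDiagram} (T : SYT μ) (hpos : 1 ≤ μ.card) :
    (dominoSYT T).maj = T.maj + (2 * μ.card + 1) := by
  classical
  unfold SYT.maj
  rw [addDomino_card, Finset.sum_range_succ, Finset.sum_range_succ]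
  have hT : (∑ i ∈ Finset.range μ.card, if (dominoSYT T).des i then i else 0)
      = ∑ i ∈ Finset.range μ.card, if T.des i then i else 0 := by
    apply Finset.sum_congr rfl
    intro i hi
    rw [Finset.mem_range] at hi
    simp only [dominoSYT_des_low T hi]
  rw [hT, if_pos (dominoSYT_des_top1 T hpos), if_pos (dominoSYT_des_top2 T)]
  omega

-- Family 1 : single run in row 1
def orF (B a : ℕ) : ℕ → ℕ := fun j => if j < a then j + 1 else j + 1 + B
def orG (a : ℕ) : ℕ → ℕ := fun j => a + 1 + j

lemma oneRun (A B h a : ℕ) (hBA : B ≤ A) (hhB : h = 0 ∨ 1 ≤ B)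
    (hB : 1 ≤ B) (ha1 : B ≤ a) (ha2 : a ≤ A) :
    ∃ T : SYT (shp A B h hBA hhB),
      T.maj = a + (Finset.Ico (A + B) (A + B + h)).sum id := by
  have H : BuilderHyps A B h (orF B a) (orG a) := by
    constructor
    · exact hBA
    · exact hhB
    · intro j hj; unfold orF; split_ifs <;> omega
    · intro j hj; unfold orG; omega
    · intro j hj; unfold orF orG; split_ifs <;> omega
    · intro j hj; unfold orF; split_ifs <;> omega
    · intro j hj; unfold orG; omega
    · intro v h1 h2
      rcases le_or_gt v a with hv | hv
      · left; exact ⟨v - 1, by omega, by unfold orF; split_ifs <;> omega⟩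
      · rcases le_or_gt v (a + B) with hv2 | hv2
        · right; exact ⟨v - a - 1, by omega, by unfold orG; omega⟩
        · left; exact ⟨v - 1 - B, by omega, by unfold orF; split_ifs <;> omega⟩
    · intro i hi j hj; unfold orF orG; split_ifs <;> omega
  refine ⟨buildSYT H, ?_⟩
  have hD : ∀ i : ℕ, ((∃ x, x < A ∧ orF B a x = i) ∧ (∃ y, y < B ∧ orG a y = i + 1))
      ↔ i ∈ ({a} : Finset ℕ) := by
    intro i
    rw [Finset.mem_singleton]
    constructor
    · rintro ⟨⟨x, hx, hfx⟩, ⟨y, hy, hgy⟩⟩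
      unfold orF at hfx
      unfold orG at hgy
      split_ifs at hfx <;> omega
    · intro hi
      refine ⟨⟨a - 1, by omega, ?_⟩, ⟨0, by omega, ?_⟩⟩
      · unfold orF; split_ifs <;> omega
      · unfold orG; omega
  rw [build_maj H ({a} : Finset ℕ) hD, Finset.sum_singleton]
  rfl

-- Family 2/3 : runs (t, u, w) with u ≥ 1, w possibly 0
def mrF (t u B a b c : ℕ) : ℕ → ℕ := fun j =>
  if j < a then j + 1
  else if j < b - t then j + 1 + t
  else if j < c - t - u then j + 1 + t + u
  else j + 1 + B

def mrG (t u a b c : ℕ) : ℕ → ℕ := fun j =>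
  if j < t then a + 1 + j
  else if j < t + u then b + 1 + (j - t)
  else c + 1 + (j - t - u)

lemma multiRun (A B h : ℕ) (hBA : B ≤ A) (hhB : h = 0 ∨ 1 ≤ B)
    (t u w a b c : ℕ)
    (ht : 1 ≤ t) (hu : 1 ≤ u) (hB : B = t + u + w)
    (ha : t ≤ a) (hb1 : a + t + 1 ≤ b) (hb2 : 2 * t + u ≤ b)
    (hc1 : b + u + 1 ≤ c) (hc2 : 2 * t + 2 * u + w ≤ c)
    (hw : (w = 0 ∧ c = A + B + 1) ∨ (1 ≤ w ∧ c + w ≤ A + B)) :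
    ∃ T : SYT (shp A B h hBA hhB),
      T.maj = a + b + (if w = 0 then 0 else c) + (Finset.Ico (A + B) (A + B + h)).sum id := by
  have H : BuilderHyps A B h (mrF t u B a b c) (mrG t u a b c) := by
    constructor
    · exact hBA
    · exact hhB
    · intro j hj; unfold mrF; split_ifs <;> omega
    · intro j hj; unfold mrG; split_ifs <;> omega
    · intro j hj; unfold mrF mrG; split_ifs <;> omega
    · intro j hj; unfold mrF; split_ifs <;> omega
    · intro j hj; unfold mrG; split_ifs <;> omega
    · intro v h1 h2
      rcases le_or_gt v a with hv | hv
      · left; exact ⟨v - 1, by omega, by unfold mrF; split_ifs <;> omega⟩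
      · rcases le_or_gt v (a + t) with hv2 | hv2
        · right; exact ⟨v - a - 1, by omega, by unfold mrG; split_ifs <;> omega⟩
        · rcases le_or_gt v b with hv3 | hv3
          · left; exact ⟨v - 1 - t, by omega, by unfold mrF; split_ifs <;> omega⟩
          · rcases le_or_gt v (b + u) with hv4 | hv4
            · right; exact ⟨t + (v - b - 1), by omega, by unfold mrG; split_ifs <;> omega⟩
            · rcases le_or_gt v c with hv5 | hv5
              · left; exact ⟨v - 1 - t - u, by omega, by unfold mrF; split_ifs <;> omega⟩
              · rcases le_or_gt v (c + w) with hv6 | hv6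
                · right; exact ⟨t + u + (v - c - 1), by omega,
                    by unfold mrG; split_ifs <;> omega⟩
                · left; exact ⟨v - 1 - B, by omega, by unfold mrF; split_ifs <;> omega⟩
    · intro i hi j hj; unfold mrF mrG; split_ifs <;> omega
  refine ⟨buildSYT H, ?_⟩
  have hD : ∀ i : ℕ, ((∃ x, x < A ∧ mrF t u B a b c x = i) ∧ (∃ y, y < B ∧ mrG t u a b c y = i + 1))
      ↔ i ∈ (if w = 0 then ({a, b} : Finset ℕ) else ({a, b, c} : Finset ℕ)) := by
    intro i
    by_cases hw0 : w = 0
    · rw [if_pos hw0, Finset.mem_insert, Finset.mem_singleton]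
      constructor
      · rintro ⟨⟨x, hx, hfx⟩, ⟨y, hy, hgy⟩⟩
        unfold mrF at hfx
        unfold mrG at hgy
        split_ifs at hfx hgy <;> omega
      · intro hi
        rcases hi with hi | hi
        · refine ⟨⟨a - 1, by omega, ?_⟩, ⟨0, by omega, ?_⟩⟩
          · unfold mrF; split_ifs <;> omega
          · unfold mrG; split_ifs <;> omega
        · refine ⟨⟨b - t - 1, by omega, ?_⟩, ⟨t, by omega, ?_⟩⟩
          · unfold mrF; split_ifs <;> omega
          · unfold mrG; split_ifs <;> omega
    · rw [if_neg hw0, Finset.mem_insert, Finset.mem_insert, Finset.mem_singleton]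
      constructor
      · rintro ⟨⟨x, hx, hfx⟩, ⟨y, hy, hgy⟩⟩
        unfold mrF at hfx
        unfold mrG at hgy
        split_ifs at hfx hgy <;> omega
      · intro hi
        rcases hi with hi | hi | hi
        · refine ⟨⟨a - 1, by omega, ?_⟩, ⟨0, by omega, ?_⟩⟩
          · unfold mrF; split_ifs <;> omega
          · unfold mrG; split_ifs <;> omega
        · refine ⟨⟨b - t - 1, by omega, ?_⟩, ⟨t, by omega, ?_⟩⟩
          · unfold mrF; split_ifs <;> omega
          · unfold mrG; split_ifs <;> omega
        · refine ⟨⟨c - t - u - 1, by omega, ?_⟩, ⟨t + u, by omega, ?_⟩⟩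
          · unfold mrF; split_ifs <;> omega
          · unfold mrG; split_ifs <;> omega
  rw [build_maj H _ hD]
  by_cases hw0 : w = 0
  · rw [if_pos hw0, if_pos hw0]
    rw [Finset.sum_insert (by rw [Finset.mem_singleton]; omega), Finset.sum_singleton]
    show a + b + _ = a + b + 0 + _
    omega
  · rw [if_neg hw0, if_neg hw0]
    rw [Finset.sum_insert (by rw [Finset.mem_insert, Finset.mem_singleton]; push_neg; omega),
      Finset.sum_insert (by rw [Finset.mem_singleton]; omega), Finset.sum_singleton]
    show a + (b + c) + _ = a + b + c + _
    omega

-- the exceptional tableau 14/25/3 of shape (2,2,1) with maj 7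
def patchEntry : ℕ × ℕ → ℕ := fun c =>
  if c = (0, 0) then 1 else if c = (0, 1) then 4 else if c = (1, 0) then 2
  else if c = (1, 1) then 5 else if c = (2, 0) then 3 else 0

lemma patch_cells (hBA : (2:ℕ) ≤ 2) (hhB : (1:ℕ) = 0 ∨ 1 ≤ (2:ℕ)) (c : ℕ × ℕ) :
    c ∈ shp 2 2 1 hBA hhB ↔
      (c = (0, 0) ∨ c = (0, 1) ∨ c = (1, 0) ∨ c = (1, 1) ∨ c = (2, 0)) := by
  obtain ⟨i, j⟩ := c
  rw [mem_shp]
  simp only [Prod.mk.injEq]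
  omega

def patchSYT (hBA : (2:ℕ) ≤ 2) (hhB : (1:ℕ) = 0 ∨ 1 ≤ (2:ℕ)) : SYT (shp 2 2 1 hBA hhB) where
  entry := patchEntry
  mapsTo := by
    intro c hc
    rw [YoungDiagram.mem_cells] at hc
    rw [Finset.mem_Icc, shp_card]
    rcases (patch_cells hBA hhB c).1 hc with rfl | rfl | rfl | rfl | rfl <;> decide
  injOn := by
    intro c hc d hd he
    rw [YoungDiagram.mem_cells] at hc hd
    rcases (patch_cells hBA hhB c).1 hc with rfl | rfl | rfl | rfl | rfl <;>
      rcases (patch_cells hBA hhB d).1 hd with rfl | rfl | rfl | rfl | rfl <;>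
      revert he <;> decide
  surjOn := by
    intro v hv
    rw [Finset.mem_Icc, shp_card] at hv
    have h5 : v ≤ 5 := hv.2
    have h1 : 1 ≤ v := hv.1
    interval_cases v
    · exact ⟨(0, 0), by rw [YoungDiagram.mem_cells, patch_cells hBA hhB]; tauto, by decide⟩
    · exact ⟨(1, 0), by rw [YoungDiagram.mem_cells, patch_cells hBA hhB]; tauto, by decide⟩
    · exact ⟨(2, 0), by rw [YoungDiagram.mem_cells, patch_cells hBA hhB]; tauto, by decide⟩
    · exact ⟨(0, 1), by rw [YoungDiagram.mem_cells, patch_cells hBA hhB]; tauto, by decide⟩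
    · exact ⟨(1, 1), by rw [YoungDiagram.mem_cells, patch_cells hBA hhB]; tauto, by decide⟩
  row_lt := by
    intro i j1 j2 hj hm
    rcases (patch_cells hBA hhB (i, j2)).1 ((YoungDiagram.mem_cells _).2 hm) with hh | hh | hh | hh | hh <;>
      rw [Prod.mk.injEq] at hh <;>
      [skip; skip; skip; skip; omega] <;>
      obtain ⟨rfl, rfl⟩ : _ ∧ _ := ⟨hh.1, hh.2⟩ <;>
      [omega; (obtain rfl : j1 = 0 := by omega); omega; (obtain rfl : j1 = 0 := by omega)] <;>
      decide
  col_lt := by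
    intro i1 i2 j hi hm
    rcases (patch_cells hBA hhB (i2, j)).1 ((YoungDiagram.mem_cells _).2 hm) with hh | hh | hh | hh | hh <;>
      rw [Prod.mk.injEq] at hh <;>
      obtain ⟨rfl, rfl⟩ : _ ∧ _ := ⟨hh.1, hh.2⟩
    · omega
    · omega
    · obtain rfl : i1 = 0 := by omega
      decide
    · obtain rfl : i1 = 0 := by omega
      decide
    · rcases Nat.lt_or_ge i1 1 with hc | hc
      · obtain rfl : i1 = 0 := by omega
        decide
      · obtain rfl : i1 = 1 := by omega
        decide

lemma patchSYT_maj (hBA : (2:ℕ) ≤ 2) (hhB : (1:ℕ) = 0 ∨ 1 ≤ (2:ℕ)) :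
    (patchSYT hBA hhB).maj = 7 := by
  classical
  have hE : (patchSYT hBA hhB).entry = patchEntry := rfl
  have hmem : ∀ c : ℕ × ℕ, (c = ((0:ℕ), (0:ℕ)) ∨ c = (0, 1) ∨ c = (1, 0) ∨ c = (1, 1) ∨ c = (2, 0)) →
      c ∈ (shp 2 2 1 hBA hhB).cells := by
    intro c hc
    rw [YoungDiagram.mem_cells, patch_cells hBA hhB]
    exact hc
  have d1 : (patchSYT hBA hhB).des 1 :=
    ⟨(0, 0), hmem _ (by tauto), (1, 0), hmem _ (by tauto), by rw [hE]; decide, by rw [hE]; decide,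
      by decide⟩
  have d2 : (patchSYT hBA hhB).des 2 :=
    ⟨(1, 0), hmem _ (by tauto), (2, 0), hmem _ (by tauto), by rw [hE]; decide, by rw [hE]; decide,
      by decide⟩
  have d4 : (patchSYT hBA hhB).des 4 :=
    ⟨(0, 1), hmem _ (by tauto), (1, 1), hmem _ (by tauto), by rw [hE]; decide, by rw [hE]; decide,
      by decide⟩
  have nd3 : ¬ (patchSYT hBA hhB).des 3 := by
    rintro ⟨c, hc, d, hd, e1, e2, hlt⟩
    rw [YoungDiagram.mem_cells] at hc hd
    rw [hE] at e1 e2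
    rcases (patch_cells hBA hhB c).1 hc with rfl | rfl | rfl | rfl | rfl <;>
      rcases (patch_cells hBA hhB d).1 hd with rfl | rfl | rfl | rfl | rfl <;>
      revert e1 e2 hlt <;> decide
  have nd0 : ¬ (patchSYT hBA hhB).des 0 := by
    rintro ⟨c, hc, d, hd, e1, e2, hlt⟩
    rw [YoungDiagram.mem_cells] at hc
    rw [hE] at e1
    rcases (patch_cells hBA hhB c).1 hc with rfl | rfl | rfl | rfl | rfl <;> revert e1 <;> decide
  unfold SYT.maj
  rw [shp_card]
  show (∑ i ∈ Finset.range 5, if (patchSYT hBA hhB).des i then i else 0) = 7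
  rw [Finset.sum_range_succ, Finset.sum_range_succ, Finset.sum_range_succ,
    Finset.sum_range_succ, Finset.sum_range_succ, Finset.sum_range_zero]
  rw [if_pos d1, if_pos d2, if_pos d4, if_neg nd3, if_neg nd0]

lemma zeroRun (A : ℕ) (hBA : (0:ℕ) ≤ A) (hhB : (0:ℕ) = 0 ∨ 1 ≤ (0:ℕ)) :
    ∃ T : SYT (shp A 0 0 hBA hhB), T.maj = 0 := by
  have H : BuilderHyps A 0 0 (fun j => j + 1) (fun _ => 0) := by
    constructor
    · exact hBA
    · exact hhB
    · intro j hj; omega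
    · intro j hj; omega
    · intro j hj; omega
    · intro j hj; omega
    · intro j hj; omega
    · intro v h1 h2; left; exact ⟨v - 1, by omega, by omega⟩
    · intro i hi j hj; omega
  refine ⟨buildSYT H, ?_⟩
  have hD : ∀ i : ℕ, ((∃ x, x < A ∧ x + 1 = i) ∧ (∃ y, y < 0 ∧ 0 = i + 1))
      ↔ i ∈ (∅ : Finset ℕ) := by
    intro i
    constructor
    · rintro ⟨-, ⟨y, hy, -⟩⟩; omega
    · intro hi; exact absurd hi (Finset.notMem_empty i)
  rw [build_maj H ∅ hD, Finset.sum_empty]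
  show 0 + (Finset.Ico (A + 0) (A + 0 + 0)).sum id = 0
  rw [Nat.add_zero, Finset.Ico_self, Finset.sum_empty]
  rfl

lemma choose2_succ (m : ℕ) : (m + 1).choose 2 = m.choose 2 + m := by
  have h := Nat.choose_succ_succ m 1
  rw [Nat.choose_one_right] at h
  norm_num at h
  omega

lemma choose2_two (p : ℕ) : (p + 2).choose 2 = p.choose 2 + (2 * p + 1) := by
  have h1 : p + 2 = (p + 1) + 1 := by ring
  rw [h1, choose2_succ (p + 1), choose2_succ p]; omega

lemma Ico0_sum (a : ℕ) : (Finset.Ico a (a + 0)).sum id = 0 := by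
  rw [Nat.add_zero, Finset.Ico_self, Finset.sum_empty]

lemma Ico1_sum (a : ℕ) : (Finset.Ico a (a + 1)).sum id = a := by
  rw [Finset.Ico_add_one_right_eq_Icc, Finset.Icc_self, Finset.sum_singleton]; rfl

lemma cover (r : ℕ) (hr : 1 ≤ r) : ∀ k v : ℕ, k ≤ v → v ≤ (2 * k + r).choose 2 - r.choose 2 →
    ∃ μ : YoungDiagram, μ.card = 2 * k + r ∧ oddCols μ = r ∧ ∃ T : SYT μ, T.maj = v := by
  intro k
  induction k with
  | zero =>
    intro v hv1 hv2
    have h1 : 2 * 0 + r = r := by ring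
    rw [h1] at hv2 ⊢
    have hveq : v = 0 := by omega
    subst hveq
    obtain ⟨T, hT⟩ := zeroRun r (by omega) (Or.inl rfl)
    refine ⟨_, ?_, ?_, T, hT⟩
    · rw [shp_card]; omega
    · rw [oddCols_row]
  | succ m ih =>
    intro v hv1 hv2
    have hC2 : (2 * (m + 1) + r).choose 2 = (2 * m + r).choose 2 + (2 * (2 * m + r) + 1) := by
      have h1 : 2 * (m + 1) + r = (2 * m + r) + 2 := by ring
      rw [h1, choose2_two]
    have hCr : r.choose 2 ≤ (2 * m + r).choose 2 := Nat.choose_le_choose 2 (by omega)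
    by_cases hva : v ≤ (m + 1) + r
    · -- single run, h = 0
      obtain ⟨T, hT⟩ := oneRun ((m + 1) + r) (m + 1) 0 v (by omega) (Or.inl rfl) (by omega)
        hv1 (by omega)
      refine ⟨_, ?_, ?_, T, ?_⟩
      · rw [shp_card]; omega
      · rw [oddCols_shp _ _ (by omega), if_neg (by norm_num)]; omega
      · rw [hT, Ico0_sum]; omega
    · by_cases hm0 : m = 0
      · -- k = 1, v ∈ [r+2, 2r+1]
        subst hm0
        have h1 : 2 * 0 + r = r := by ring
        rw [h1] at hC2 hCr
        have hub : v ≤ 2 * r + 1 := by omega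
        obtain ⟨T, hT⟩ := oneRun r 1 1 (v - (r + 1)) (by omega) (Or.inr (by omega)) (by omega)
          (by omega) (by omega)
        refine ⟨_, ?_, ?_, T, ?_⟩
        · rw [shp_card]; omega
        · rw [oddCols_shp _ _ (by omega), if_pos (by norm_num)]; omega
        · rw [hT, Ico1_sum]; omega
      · -- k = m+1 ≥ 2
        have hm1 : 1 ≤ m := by omega
        by_cases hvc : v + (m + 1) + 2 ≤ 2 * (2 * (m + 1) + r)
        · -- two runs, h = 0
          obtain ⟨t, ht1, htk, hl, hu2⟩ : ∃ t, 1 ≤ t ∧ t + 1 ≤ m + 1 ∧ (m + 1) + 2 * t ≤ v ∧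
              v + 2 * (m + 1) + 1 ≤ 2 * (2 * (m + 1) + r) + t := by
            refine ⟨if v + 2 * (m + 1) + 1 ≤ 2 * (2 * (m + 1) + r) + 1 then 1
              else v + 2 * (m + 1) + 1 - 2 * (2 * (m + 1) + r), ?_, ?_, ?_, ?_⟩ <;>
              split_ifs <;> omega
          obtain ⟨T, hT⟩ := multiRun ((m + 1) + r) (m + 1) 0 (by omega) (Or.inl rfl)
            t (m + 1 - t) 0
            (t + (v - ((m + 1) + 2 * t) - min (v - ((m + 1) + 2 * t)) r))
            ((m + 1) + t + min (v - ((m + 1) + 2 * t)) r)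
            ((m + 1) + r + (m + 1) + 1)
            ht1 (by omega) (by omega) (by omega) (by omega) (by omega) (by omega) (by omega)
            (Or.inl ⟨rfl, rfl⟩)
          refine ⟨_, ?_, ?_, T, ?_⟩
          · rw [shp_card]; omega
          · rw [oddCols_shp _ _ (by omega), if_neg (by norm_num)]; omega
          · rw [hT, Ico0_sum, if_pos rfl]; omega
        · by_cases hvg : (m + 1) + 2 * (2 * (m + 1) + r) ≤ v + 4
          · -- induction step via vertical domino
            obtain ⟨μ, hμ1, hμ2, T, hT⟩ := ih (v - (2 * (2 * m + r) + 1)) (by omega) (by omega)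
            refine ⟨addDomino μ, ?_, ?_, dominoSYT T, ?_⟩
            · rw [addDomino_card, hμ1]; omega
            · rw [addDomino_oddCols, hμ2]
            · rw [dominoSYT_maj T (by omega), hT, hμ1]; omega
          · -- middle zone : 2n-k-1 ≤ v ≤ k+2n-5
            by_cases hm2 : m = 1
            · -- k = 2, v = 2n-3
              subst hm2
              have hveq : v = 2 * r + 5 := by omega
              by_cases hr1 : r = 1
              · -- the exceptional case (5,2,1,7)
                subst hr1
                refine ⟨shp 2 2 1 (le_refl 2) (Or.inr (by omega)), ?_, ?_,
                  patchSYT _ _, ?_⟩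
                · rw [shp_card]
                · rw [oddCols_shp _ _ (by omega), if_pos (by norm_num)]
                · rw [patchSYT_maj]; omega
              · -- k = 2, r ≥ 2 : 2-run with h = 1
                obtain ⟨T, hT⟩ := multiRun (r + 1) 2 1 (by omega) (Or.inr (by omega))
                  1 1 0 1 (r + 1) ((r + 1) + 2 + 1)
                  (by omega) (by omega) (by omega) (by omega) (by omega) (by omega)
                  (by omega) (by omega) (Or.inl ⟨rfl, rfl⟩)
                refine ⟨_, ?_, ?_, T, ?_⟩
                · rw [shp_card]; omega
                · rw [oddCols_shp _ _ (by omega), if_pos (by norm_num)]; omega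
                · rw [hT, Ico1_sum, if_pos rfl]; omega
            · -- k ≥ 3 : three runs, h = 0
              have hm3 : 2 ≤ m := by omega
              obtain ⟨t, ht1, htk, hl, hu2⟩ : ∃ t, 1 ≤ t ∧ t + 2 ≤ m + 1 ∧
                  (m + 1) + 4 * t + 2 ≤ v ∧
                  v + 3 * (m + 1) + 2 ≤ 3 * (2 * (m + 1) + r) + 2 * t := by
                refine ⟨if v + 3 * (m + 1) ≤ 3 * (2 * (m + 1) + r) then 1
                  else (v + 3 * (m + 1) - 3 * (2 * (m + 1) + r) + 3) / 2, ?_, ?_, ?_, ?_⟩ <;>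
                  split_ifs <;> omega
              obtain ⟨T, hT⟩ := multiRun ((m + 1) + r) (m + 1) 0 (by omega) (Or.inl rfl)
                t 1 (m - t)
                (t + (v - ((m + 1) + 4 * t + 2) - min (v - ((m + 1) + 4 * t + 2)) r -
                  min (v - ((m + 1) + 4 * t + 2) - min (v - ((m + 1) + 4 * t + 2)) r)
                    (2 * (m + 1) + r - (m + 1) - t - 2)))
                (2 * t + 1 + min (v - ((m + 1) + 4 * t + 2) - min (v - ((m + 1) + 4 * t + 2)) r)
                  (2 * (m + 1) + r - (m + 1) - t - 2))
                ((m + 1) + t + 1 + min (v - ((m + 1) + 4 * t + 2)) r)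
                ht1 (by omega) (by omega) (by omega) (by omega) (by omega) (by omega) (by omega)
                (Or.inr ⟨by omega, by omega⟩)
              refine ⟨_, ?_, ?_, T, ?_⟩
              · rw [shp_card]; omega
              · rw [oddCols_shp _ _ (by omega), if_neg (by norm_num)]; omega
              · rw [hT, Ico0_sum, if_neg (by omega)]; omega


/-- For `n = 2k + r` with `r ≥ 1`, every value in `[k, C(n,2) - C(r,2)]` is the
major index of some standard Young tableau of size `n` whose shape has exactly
`r` odd columns. -/
theorem maj_surjective_on_interval (n k r : ℕ) (h : n = 2 * k + r) (hr : 1 ≤ r) :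
    ∀ v : ℕ, k ≤ v → v ≤ n.choose 2 - r.choose 2 →
      ∃ μ : YoungDiagram, μ.card = n ∧ oddCols μ = r ∧ ∃ T : SYT μ, T.maj = v := by
  subst h
  intro v hv1 hv2
  exact cover r hr k v hv1 hv2
end
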